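/- (Recovery of an optimal greedy policy.) Let κ > 0, let u* be the optimal value of min{ u ∈ ℝ : Σ_{a ∈ A} q_a^{-1}(u) ≤ κ }, set ξ*_a = q_a^{-1}(u*), and let C = { a ∈ A : q_a(ξ*_a) = u* }. Define d* ∈ ℝ^A as follows: (i) if there exists ā ∈ C with 0 ∈ ∂q_{ā}(ξ*_{ā}), let d* be the unit vector with d*_{ā} = 1 and d*_a = 0 otherwise; (ii) otherwise, choose any f_a ∈ ∂q_a(ξ*_a) for a ∈ C, set e_a = −1/f_a for a ∈ C and e_a = 0 for a ∉ C, and d*_a = e_a / Σ_{a'} e_{a'}. Then d* ∈ Δ^A, d* is optimal in max_{d ∈ Δ^A} min{ Σ_a d_a q_a(ξ_a) : ξ ≥ 0, Σ_a ξ_a ≤ κ }, and (d*, ξ*) is a saddle point of this max-min problem: Σ_a d*_a q_a(ξ_a) ≥ Σ_a d*_a q_a(ξ*_a) = u* ≥ Σ_a d_a q_a(ξ*_a) for every feasible ξ and every d ∈ Δ^A. Here ∂q_a(ξ) denotes the subdifferential of the convex function q_a at ξ. -/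

import Mathlib

/-!
For continuous convex `V a`, `N a` on a compact convex `K`, both
`q_a ξ = min {V a p | p ∈ K, N a p ≤ ξ}` and `q_a⁻¹ u = min {N a p | p ∈ K, V a p ≤ u}` are convex
(mix two minimisers), and a minimiser of one problem is feasible for the other. Hence
`q_a (ξ*_a) ≤ u*`, with equality unless `ξ*_a = 0`; and if every `V a` beats `u*` strictly,
convexity of the `q_a⁻¹` lets a smaller level be admissible unless `∑ ξ*_a = κ`.

In case (i), `ξ*_ā` minimises `q_ā`, so `ξ*` is a best response to the unit vector at `ā`.
In case (ii), the weights `d*_a ∝ -1 / f_a` make `d*_a f_a` constant on `C`, so the subgradient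
inequalities add up to `∑ d*_a q_a (ξ_a) ≥ ∑ d*_a q_a (ξ*_a) + c (κ - ∑ ξ_a)` with `c > 0`.
Either way `d*` lives on `C`, where `q_a (ξ*_a) = u* ≥ q_b (ξ*_b)` for all `b`, which gives the
saddle inequalities and the value `u*` of the max-min problem.
-/

open scoped Classical

open Set Filter Topology

lemma exists_pos_le_one_add_mul_lt {a c : ℝ} (h : a < c) (b : ℝ) :
    ∃ t : ℝ, 0 < t ∧ t ≤ 1 ∧ a + t * b < c := by
  have hcont : ContinuousAt (fun t : ℝ => a + t * b) 0 := by fun_prop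
  have hnear : ∀ᶠ t in 𝓝[>] (0 : ℝ), a + t * b < c :=
    nhdsWithin_le_nhds (hcont.eventually (eventually_lt_nhds (by simpa using h)))
  obtain ⟨t, hlt, ht⟩ := (hnear.and (Ioc_mem_nhdsGT one_pos)).exists
  exact ⟨t, ht.1, ht.2, hlt⟩

section ConstrainedInf

variable {E : Type*} {K : Set E} {f g : E → ℝ} {c d u : ℝ}

/-- Both `q_a` and `q_a⁻¹` are of this form, with value and constraint exchanged. When no
`p ∈ K` satisfies the constraint the value is `sInf ∅ = 0`, hence the feasibility hypotheses
below. -/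
noncomputable def constrainedInf (K : Set E) (f g : E → ℝ) (c : ℝ) : ℝ :=
  sInf (f '' {p | p ∈ K ∧ g p ≤ c})

lemma le_constrainedInf {b : ℝ} (hne : ∃ p ∈ K, g p ≤ c)
    (h : ∀ p ∈ K, g p ≤ c → b ≤ f p) : b ≤ constrainedInf K f g c := by
  obtain ⟨p, hp, hgp⟩ := hne
  exact le_csInf ⟨f p, p, ⟨hp, hgp⟩, rfl⟩ (forall_mem_image.2 fun q hq => h q hq.1 hq.2)

lemma constrainedInf_nonneg (hg : ∀ p ∈ K, 0 ≤ g p) (hne : ∃ p ∈ K, f p ≤ u) :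
    0 ≤ constrainedInf K g f u :=
  le_constrainedInf hne fun p hp _ => hg p hp

lemma exists_lt_or_isMinOn_constrainedInf (hg0 : ∃ p ∈ K, g p ≤ 0) {ξ : ℝ} (hξ : 0 ≤ ξ)
    (hle : constrainedInf K f g ξ ≤ u) :
    (∃ p ∈ K, f p < u) ∨
      constrainedInf K f g ξ = u ∧ IsMinOn (constrainedInf K f g) (Ici 0) ξ := by
  by_cases hlt : ∃ p ∈ K, f p < u
  · exact Or.inl hlt
  push Not at hlt
  have hge : ∀ η ∈ Ici (0 : ℝ), u ≤ constrainedInf K f g η := fun η hη =>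
    le_constrainedInf (let ⟨p, hp, hgp⟩ := hg0; ⟨p, hp, hgp.trans hη⟩) fun p hp _ => hlt p hp
  exact Or.inr ⟨le_antisymm hle (hge ξ hξ), fun η hη => hle.trans (hge η hη)⟩

variable [TopologicalSpace E]

lemma constrainedInf_le (hK : IsCompact K) (hf : Continuous f) {p : E} (hp : p ∈ K)
    (hgp : g p ≤ c) : constrainedInf K f g c ≤ f p :=
  csInf_le ((hK.bddBelow_image hf.continuousOn).mono (image_mono fun _ hq => hq.1))
    ⟨p, ⟨hp, hgp⟩, rfl⟩

lemma exists_constrainedInf_eq (hK : IsCompact K) (hf : Continuous f) (hg : Continuous g)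
    (hne : ∃ p ∈ K, g p ≤ c) : ∃ p ∈ K, g p ≤ c ∧ constrainedInf K f g c = f p := by
  have hKc : IsCompact {p | p ∈ K ∧ g p ≤ c} := hK.inter_right (isClosed_le hg continuous_const)
  obtain ⟨p, hp, hmin⟩ := hKc.exists_isMinOn hne hf.continuousOn
  exact ⟨p, hp.1, hp.2, (IsLeast.csInf_eq ⟨mem_image_of_mem f hp, forall_mem_image.2 hmin⟩)⟩

lemma constrainedInf_anti (hK : IsCompact K) (hf : Continuous f) (hg : Continuous g)
    (hne : ∃ p ∈ K, g p ≤ c) (hcd : c ≤ d) : constrainedInf K f g d ≤ constrainedInf K f g c := by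
  obtain ⟨p, hp, hgp, hval⟩ := exists_constrainedInf_eq hK hf hg hne
  exact hval ▸ constrainedInf_le hK hf hp (hgp.trans hcd)

/-- A minimiser of `f` under `g ≤ c` is feasible for minimising `g` under `f ≤ d`. -/
lemma constrainedInf_swap_le (hK : IsCompact K) (hf : Continuous f) (hg : Continuous g)
    (hne : ∃ p ∈ K, g p ≤ c) (h : constrainedInf K f g c ≤ d) : constrainedInf K g f d ≤ c := by
  obtain ⟨p, hp, hgp, hval⟩ := exists_constrainedInf_eq hK hf hg hne
  exact (constrainedInf_le hK hg hp (hval ▸ h)).trans hgp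

variable [AddCommGroup E] [Module ℝ E]

lemma convexOn_constrainedInf (hK : IsCompact K) (hf : Continuous f) (hg : Continuous g)
    (hfc : ConvexOn ℝ K f) (hgc : ConvexOn ℝ K g) :
    ConvexOn ℝ {c | ∃ p ∈ K, g p ≤ c} (constrainedInf K f g) := by
  have hdom : {c | ∃ p ∈ K, g p ≤ c}.OrdConnected :=
    ⟨fun c ⟨p, hp, hgp⟩ _ _ _ hx => ⟨p, hp, hgp.trans hx.1⟩⟩
  refine ⟨hdom.convex, fun c₁ hc₁ c₂ hc₂ s t hs ht hst => ?_⟩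
  obtain ⟨p₁, hp₁, hgp₁, hval₁⟩ := exists_constrainedInf_eq hK hf hg hc₁
  obtain ⟨p₂, hp₂, hgp₂, hval₂⟩ := exists_constrainedInf_eq hK hf hg hc₂
  have hmem : s • p₁ + t • p₂ ∈ K := hfc.1 hp₁ hp₂ hs ht hst
  have hgmix : g (s • p₁ + t • p₂) ≤ s • c₁ + t • c₂ :=
    (hgc.2 hp₁ hp₂ hs ht hst).trans (by gcongr)
  rw [hval₁, hval₂]
  exact (constrainedInf_le hK hf hmem hgmix).trans (hfc.2 hp₁ hp₂ hs ht hst)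

/-- If the optimal budget `ξ` for the level `u` were positive while `f` still beats `u` at
budget `ξ`, convexity of the budget-to-value map would let a strictly smaller budget reach
`u`. -/
lemma constrainedInf_eq_zero_of_lt (hK : IsCompact K) (hf : Continuous f) (hg : Continuous g)
    (hfc : ConvexOn ℝ K f) (hgc : ConvexOn ℝ K g) (hg0 : ∃ p ∈ K, g p ≤ 0)
    (hg_nonneg : ∀ p ∈ K, 0 ≤ g p) (hne : ∃ p ∈ K, f p ≤ u)
    (hlt : constrainedInf K f g (constrainedInf K g f u) < u) : constrainedInf K g f u = 0 := by
  set ξ := constrainedInf K g f u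
  have hξ : 0 ≤ ξ := constrainedInf_nonneg hg_nonneg hne
  have hfeas : ∀ c, 0 ≤ c → ∃ p ∈ K, g p ≤ c := fun c hc =>
    let ⟨p, hp, hgp⟩ := hg0; ⟨p, hp, hgp.trans hc⟩
  obtain ⟨t, ht0, ht1, hcomb⟩ := exists_pos_le_one_add_mul_lt hlt
    (constrainedInf K f g 0 - constrainedInf K f g ξ)
  have hshrink : constrainedInf K f g ((1 - t) * ξ) ≤ u := by
    have := (convexOn_constrainedInf hK hf hg hfc hgc).2 (hfeas ξ hξ) (hfeas 0 le_rfl)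
      (sub_nonneg.2 ht1) ht0.le (sub_add_cancel 1 t)
    simp only [smul_eq_mul, mul_zero, add_zero] at this
    linarith
  have hle : ξ ≤ (1 - t) * ξ :=
    constrainedInf_swap_le hK hf hg (hfeas _ (by nlinarith)) hshrink
  exact le_antisymm (by nlinarith) hξ

end ConstrainedInf

def HasSubgradientWithinAt (φ : ℝ → ℝ) (g : ℝ) (s : Set ℝ) (ξ : ℝ) : Prop :=
  ∀ η ∈ s, φ ξ + g * (η - ξ) ≤ φ η

lemma IsMinOn.hasSubgradientWithinAt_zero {φ : ℝ → ℝ} {s : Set ℝ} {ξ : ℝ}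
    (h : IsMinOn φ s ξ) : HasSubgradientWithinAt φ 0 s ξ := fun η hη => by
  simpa using isMinOn_iff.1 h η hη

lemma HasSubgradientWithinAt.nonpos {φ : ℝ → ℝ} {g ξ : ℝ}
    (h : HasSubgradientWithinAt φ g (Ici 0) ξ) (hξ : 0 ≤ ξ) (hanti : AntitoneOn φ (Ici 0)) :
    g ≤ 0 := by
  have hξ1 : ξ + 1 ∈ Ici 0 := by simp only [mem_Ici]; linarith
  have := (h (ξ + 1) hξ1).trans (hanti hξ hξ1 (by linarith))
  rw [add_sub_cancel_left, mul_one] at this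
  linarith

def budgetAllocations (A : Type*) [Fintype A] (κ : ℝ) : Set (A → ℝ) :=
  {ξ | (∀ a, 0 ≤ ξ a) ∧ ∑ a, ξ a ≤ κ}

section Saddle

variable {A : Type*} [Fintype A] {q : A → ℝ → ℝ} {ξs d : A → ℝ} {κ u : ℝ}

lemma div_sum_mem_stdSimplex {e : A → ℝ} (he : ∀ a, 0 ≤ e a) (hpos : 0 < ∑ a, e a) :
    (fun a => e a / ∑ a', e a') ∈ stdSimplex ℝ A :=
  ⟨fun a => div_nonneg (he a) hpos.le, by rw [← Finset.sum_div, div_self hpos.ne']⟩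

/-- Weights that equalise the marginal rates `d a * f a = -r` on the active set `C` make the
first-order change of `∑ d a * q a (ξ a)` equal to `r` times the budget released, which is
nonnegative once `ξs` exhausts the budget. -/
lemma isMinOn_sum_mul_of_hasSubgradientWithinAt {C : Set A} {f : A → ℝ} {r : ℝ} (hr : 0 ≤ r)
    (hsub : ∀ a ∈ C, HasSubgradientWithinAt (q a) (f a) (Ici 0) (ξs a))
    (hd : ∀ a ∈ C, 0 ≤ d a ∧ d a * f a = -r) (hoff : ∀ a ∉ C, d a = 0 ∧ ξs a = 0)
    (hsat : ∑ a, ξs a = κ) :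
    IsMinOn (fun ξ => ∑ a, d a * q a (ξ a)) (budgetAllocations A κ) ξs := by
  refine isMinOn_iff.2 fun ξ hξ => ?_
  have hterm : ∀ a, d a * q a (ξs a) + r * (ξs a - ξ a) ≤ d a * q a (ξ a) := by
    intro a
    by_cases ha : a ∈ C
    · obtain ⟨hda, hdf⟩ := hd a ha
      have := mul_le_mul_of_nonneg_left (hsub a ha (ξ a) (hξ.1 a)) hda
      linear_combination this + (ξs a - ξ a) * hdf
    · obtain ⟨hd0, hξ0⟩ := hoff a ha
      rw [hd0, hξ0]
      nlinarith [hξ.1 a]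
  have hsum := Finset.sum_le_sum fun a (_ : a ∈ Finset.univ) => hterm a
  rw [Finset.sum_add_distrib, ← Finset.mul_sum, Finset.sum_sub_distrib, hsat] at hsum
  nlinarith [mul_nonneg hr (sub_nonneg.2 hξ.2)]

lemma bddBelow_image_sum_mul (hd : ∀ a, 0 ≤ d a) (hq : ∀ a, ∃ B, ∀ η, 0 ≤ η → B ≤ q a η) :
    BddBelow ((fun ξ : A → ℝ => ∑ a, d a * q a (ξ a)) '' budgetAllocations A κ) := by
  choose B hB using hq
  refine ⟨∑ a, d a * B a, forall_mem_image.2 fun ξ hξ => ?_⟩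
  exact Finset.sum_le_sum fun a _ => mul_le_mul_of_nonneg_left (hB a _ (hξ.1 a)) (hd a)

lemma sum_mul_le_of_le (hd : d ∈ stdSimplex ℝ A) (hq : ∀ a, q a (ξs a) ≤ u) :
    ∑ a, d a * q a (ξs a) ≤ u :=
  calc ∑ a, d a * q a (ξs a) ≤ ∑ a, d a * u :=
        Finset.sum_le_sum fun a _ => mul_le_mul_of_nonneg_left (hq a) (hd.1 a)
    _ = u := by rw [← Finset.sum_mul, hd.2, one_mul]

lemma sum_mul_eq_of_support (hd : d ∈ stdSimplex ℝ A) (hsupp : ∀ a, q a (ξs a) ≠ u → d a = 0) :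
    ∑ a, d a * q a (ξs a) = u :=
  calc ∑ a, d a * q a (ξs a) = ∑ a, d a * u := Finset.sum_congr rfl fun a _ => by
        by_cases ha : q a (ξs a) = u
        · rw [ha]
        · rw [hsupp a ha, zero_mul, zero_mul]
    _ = u := by rw [← Finset.sum_mul, hd.2, one_mul]

lemma sInf_image_sum_mul_le (hq : ∀ a, ∃ B, ∀ η, 0 ≤ η → B ≤ q a η)
    (hξs : ξs ∈ budgetAllocations A κ) (hqξ : ∀ a, q a (ξs a) ≤ u) (hd : d ∈ stdSimplex ℝ A) :
    sInf ((fun ξ : A → ℝ => ∑ a, d a * q a (ξ a)) '' budgetAllocations A κ) ≤ u :=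
  (csInf_le (bddBelow_image_sum_mul hd.1 hq) ⟨ξs, hξs, rfl⟩).trans (sum_mul_le_of_le hd hqξ)

lemma sInf_image_sum_mul_eq (hq : ∀ a, ∃ B, ∀ η, 0 ≤ η → B ≤ q a η)
    (hξs : ξs ∈ budgetAllocations A κ) (hqξ : ∀ a, q a (ξs a) ≤ u) (hd : d ∈ stdSimplex ℝ A)
    (hsupp : ∀ a, q a (ξs a) ≠ u → d a = 0)
    (hbest : ∀ ξ ∈ budgetAllocations A κ, ∑ a, d a * q a (ξs a) ≤ ∑ a, d a * q a (ξ a)) :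
    sInf ((fun ξ : A → ℝ => ∑ a, d a * q a (ξ a)) '' budgetAllocations A κ) = u :=
  le_antisymm (sInf_image_sum_mul_le hq hξs hqξ hd) <| le_csInf ⟨_, ξs, hξs, rfl⟩ <|
    forall_mem_image.2 fun ξ hξ => sum_mul_eq_of_support hd hsupp ▸ hbest ξ hξ

lemma maxmin_saddle_of_isMinOn (hq : ∀ a, ∃ B, ∀ η, 0 ≤ η → B ≤ q a η)
    (hξs : ξs ∈ budgetAllocations A κ) (hqξ : ∀ a, q a (ξs a) ≤ u)
    (hspec : d ∈ stdSimplex ℝ A ∧ (∀ a ∉ {a | q a (ξs a) = u}, d a = 0) ∧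
      IsMinOn (fun ξ => ∑ a, d a * q a (ξ a)) (budgetAllocations A κ) ξs) :
    d ∈ stdSimplex ℝ A ∧
    sInf ((fun ξ : A → ℝ => ∑ a, d a * q a (ξ a)) '' budgetAllocations A κ) = u ∧
    (∀ d' ∈ stdSimplex ℝ A,
      sInf ((fun ξ : A → ℝ => ∑ a, d' a * q a (ξ a)) '' budgetAllocations A κ) ≤ u) ∧
    (∀ ξ ∈ budgetAllocations A κ, ∑ a, d a * q a (ξs a) ≤ ∑ a, d a * q a (ξ a)) ∧
    ∑ a, d a * q a (ξs a) = u ∧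
    (∀ d' ∈ stdSimplex ℝ A, ∑ a, d' a * q a (ξs a) ≤ u) := by
  obtain ⟨hd, hsupp, hmin⟩ := hspec
  have hbest := isMinOn_iff.1 hmin
  exact ⟨hd, sInf_image_sum_mul_eq hq hξs hqξ hd hsupp hbest,
    fun d' hd' => sInf_image_sum_mul_le hq hξs hqξ hd', hbest, sum_mul_eq_of_support hd hsupp,
    fun d' hd' => sum_mul_le_of_le hd' hqξ⟩

lemma unit_weights_isMinOn [DecidableEq A] {C : Set A} {b : A} (hb : b ∈ C)
    (h0 : HasSubgradientWithinAt (q b) 0 (Ici 0) (ξs b))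
    (hd : d = fun a => if a = b then (1 : ℝ) else 0) :
    d ∈ stdSimplex ℝ A ∧ (∀ a ∉ C, d a = 0) ∧
      IsMinOn (fun ξ => ∑ a, d a * q a (ξ a)) (budgetAllocations A κ) ξs := by
  subst hd
  refine ⟨⟨fun a => ?_, by simp⟩, fun a ha => if_neg (by rintro rfl; exact ha hb),
    isMinOn_iff.2 fun ξ hξ => by simpa using h0 (ξ b) (hξ.1 b)⟩
  dsimp only
  split_ifs <;> norm_num

lemma inv_neg_weights_isMinOn {C : Set A} {f : A → ℝ} (hC : C.Nonempty) (hf_neg : ∀ a ∈ C, f a < 0)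
    (hsub : ∀ a ∈ C, HasSubgradientWithinAt (q a) (f a) (Ici 0) (ξs a))
    (hoff : ∀ a ∉ C, ξs a = 0) (hsat : ∑ a, ξs a = κ)
    (hd : d = fun a => (if a ∈ C then -(1 / f a) else 0) /
      ∑ a', if a' ∈ C then -(1 / f a') else 0) :
    d ∈ stdSimplex ℝ A ∧ (∀ a ∉ C, d a = 0) ∧
      IsMinOn (fun ξ => ∑ a, d a * q a (ξ a)) (budgetAllocations A κ) ξs := by
  set e : A → ℝ := fun a => if a ∈ C then -(1 / f a) else 0
  have he_pos : ∀ a ∈ C, 0 < e a := fun a ha => by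
    simp only [e, if_pos ha, neg_pos, one_div_neg]; exact hf_neg a ha
  have he : ∀ a, 0 ≤ e a := fun a => by
    by_cases ha : a ∈ C
    · exact (he_pos a ha).le
    · simp only [e, if_neg ha, le_refl]
  obtain ⟨c, hc⟩ := hC
  have hE : 0 < ∑ a, e a := Finset.sum_pos' (fun a _ => he a) ⟨c, Finset.mem_univ c, he_pos c hc⟩
  have hoffd : ∀ a ∉ C, d a = 0 := fun a ha => by simp only [hd, e, if_neg ha, zero_div]
  refine ⟨hd ▸ div_sum_mem_stdSimplex he hE, hoffd, ?_⟩
  refine isMinOn_sum_mul_of_hasSubgradientWithinAt (one_div_pos.2 hE).le hsub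
    (fun a ha => ⟨hd ▸ div_nonneg (he a) hE.le, ?_⟩) (fun a ha => ⟨hoffd a ha, hoff a ha⟩) hsat
  have hfa : f a ≠ 0 := (hf_neg a ha).ne
  simp only [hd, if_pos ha]
  field_simp

end Saddle

structure IsConvexBudgetFamily {E A : Type*} [TopologicalSpace E] [AddCommGroup E] [Module ℝ E]
    (K : Set E) (V N : A → E → ℝ) : Prop where
  isCompact : IsCompact K
  continuous_value : ∀ a, Continuous (V a)
  continuous_cost : ∀ a, Continuous (N a)
  convexOn_value : ∀ a, ConvexOn ℝ K (V a)
  convexOn_cost : ∀ a, ConvexOn ℝ K (N a)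
  cost_nonneg : ∀ a, ∀ p ∈ K, 0 ≤ N a p
  exists_cost_nonpos : ∀ a, ∃ p ∈ K, N a p ≤ 0

def admissibleLevels {E A : Type*} [Fintype A] (K : Set E) (V N : A → E → ℝ) (κ : ℝ) : Set ℝ :=
  {u | (∀ a, ∃ p ∈ K, V a p ≤ u) ∧ ∑ a, constrainedInf K (N a) (V a) u ≤ κ}

namespace IsConvexBudgetFamily

variable {E A : Type*} [TopologicalSpace E] [AddCommGroup E] [Module ℝ E]
  {K : Set E} {V N : A → E → ℝ} {κ u : ℝ}

/-- Otherwise, as the optimal budgets are convex in the level and finite at some level below `u`,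
slightly smaller levels would still be admissible. -/
lemma sum_constrainedInf_eq_of_isLeast [Fintype A] [Nonempty A] (h : IsConvexBudgetFamily K V N)
    (hu : IsLeast (admissibleLevels K V N κ) u) (hstrict : ∀ a, ∃ p ∈ K, V a p < u) :
    ∑ a, constrainedInf K (N a) (V a) u = κ := by
  choose p hpK hpu using hstrict
  set m := Finset.univ.sup' Finset.univ_nonempty fun a => V a (p a)
  have hm : m < u := (Finset.sup'_lt_iff _).2 fun a _ => hpu a
  have hpm : ∀ a, V a (p a) ≤ m := fun a => Finset.le_sup' (fun a => V a (p a)) (Finset.mem_univ a)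
  set F := fun v => ∑ a, constrainedInf K (N a) (V a) v
  refine le_antisymm hu.1.2 (not_lt.1 fun hlt => ?_)
  obtain ⟨t, ht0, ht1, hsum⟩ := exists_pos_le_one_add_mul_lt hlt (F m - F u)
  have hconv : ∀ a, constrainedInf K (N a) (V a) ((1 - t) * u + t * m) ≤
      (1 - t) * constrainedInf K (N a) (V a) u + t * constrainedInf K (N a) (V a) m := fun a =>
    (convexOn_constrainedInf h.isCompact (h.continuous_cost a) (h.continuous_value a)
      (h.convexOn_cost a) (h.convexOn_value a)).2 ⟨p a, hpK a, (hpu a).le⟩ ⟨p a, hpK a, hpm a⟩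
      (sub_nonneg.2 ht1) ht0.le (sub_add_cancel 1 t)
  have hadm : (1 - t) * u + t * m ∈ admissibleLevels K V N κ := by
    refine ⟨fun a => ⟨p a, hpK a, by nlinarith [hpm a]⟩, ?_⟩
    calc F ((1 - t) * u + t * m)
        ≤ ∑ a, ((1 - t) * constrainedInf K (N a) (V a) u + t * constrainedInf K (N a) (V a) m) :=
          Finset.sum_le_sum fun a _ => hconv a
      _ = F u + t * (F m - F u) := by
          simp only [F, Finset.sum_add_distrib, ← Finset.mul_sum]; ring
      _ ≤ κ := hsum.le
  nlinarith [hu.2 hadm]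

lemma constrainedInf_cost_nonneg (h : IsConvexBudgetFamily K V N) (a : A)
    (hne : ∃ p ∈ K, V a p ≤ u) : 0 ≤ constrainedInf K (N a) (V a) u :=
  constrainedInf_nonneg (h.cost_nonneg a) hne

lemma constrainedInf_value_le (h : IsConvexBudgetFamily K V N) (a : A)
    (hne : ∃ p ∈ K, V a p ≤ u) :
    constrainedInf K (V a) (N a) (constrainedInf K (N a) (V a) u) ≤ u :=
  constrainedInf_swap_le h.isCompact (h.continuous_cost a) (h.continuous_value a) hne le_rfl

lemma mem_budgetAllocations_of_isLeast [Fintype A] (h : IsConvexBudgetFamily K V N)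
    (hu : IsLeast (admissibleLevels K V N κ) u) :
    (fun a => constrainedInf K (N a) (V a) u) ∈ budgetAllocations A κ :=
  ⟨fun a => h.constrainedInf_cost_nonneg a (hu.1.1 a), hu.1.2⟩

lemma antitoneOn_constrainedInf (h : IsConvexBudgetFamily K V N) (a : A) :
    AntitoneOn (constrainedInf K (V a) (N a)) (Ici 0) := fun _ hξ _ _ hξη =>
  constrainedInf_anti h.isCompact (h.continuous_value a) (h.continuous_cost a)
    (let ⟨p, hp, hNp⟩ := h.exists_cost_nonpos a; ⟨p, hp, hNp.trans hξ⟩) hξη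

lemma exists_le_constrainedInf (h : IsConvexBudgetFamily K V N) (a : A) :
    ∃ B, ∀ ξ, 0 ≤ ξ → B ≤ constrainedInf K (V a) (N a) ξ := by
  obtain ⟨B, hB⟩ := h.isCompact.bddBelow_image (h.continuous_value a).continuousOn
  obtain ⟨p₀, hp₀, hNp₀⟩ := h.exists_cost_nonpos a
  exact ⟨B, fun ξ hξ => le_constrainedInf ⟨p₀, hp₀, hNp₀.trans hξ⟩ fun p hp _ => hB ⟨p, hp, rfl⟩⟩

lemma exists_lt_or_isMinOn (h : IsConvexBudgetFamily K V N) (a : A)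
    (hne : ∃ p ∈ K, V a p ≤ u) :
    (∃ p ∈ K, V a p < u) ∨
      constrainedInf K (V a) (N a) (constrainedInf K (N a) (V a) u) = u ∧
        IsMinOn (constrainedInf K (V a) (N a)) (Ici 0) (constrainedInf K (N a) (V a) u) :=
  exists_lt_or_isMinOn_constrainedInf (h.exists_cost_nonpos a) (h.constrainedInf_cost_nonneg a hne)
    (h.constrainedInf_value_le a hne)

lemma constrainedInf_cost_eq_zero_of_lt (h : IsConvexBudgetFamily K V N) (a : A)
    (hne : ∃ p ∈ K, V a p ≤ u)
    (hlt : constrainedInf K (V a) (N a) (constrainedInf K (N a) (V a) u) < u) :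
    constrainedInf K (N a) (V a) u = 0 :=
  constrainedInf_eq_zero_of_lt h.isCompact (h.continuous_value a) (h.continuous_cost a)
    (h.convexOn_value a) (h.convexOn_cost a) (h.exists_cost_nonpos a) (h.cost_nonneg a) hne hlt

/-- If no problem met the least admissible level exactly, every optimal budget would vanish
and yet, by `sum_constrainedInf_eq_of_isLeast`, they would add up to `κ > 0`. -/
lemma exists_constrainedInf_eq_of_isLeast [Fintype A] [Nonempty A]
    (h : IsConvexBudgetFamily K V N) (hκ : 0 < κ) (hu : IsLeast (admissibleLevels K V N κ) u) :
    ∃ a, constrainedInf K (V a) (N a) (constrainedInf K (N a) (V a) u) = u := by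
  by_contra! hne
  have hlt : ∀ a, constrainedInf K (V a) (N a) (constrainedInf K (N a) (V a) u) < u := fun a =>
    (h.constrainedInf_value_le a (hu.1.1 a)).lt_of_ne (hne a)
  have hstrict : ∀ a, ∃ p ∈ K, V a p < u := fun a =>
    (h.exists_lt_or_isMinOn a (hu.1.1 a)).resolve_right fun h' => hne a h'.1
  have hsum := h.sum_constrainedInf_eq_of_isLeast hu hstrict
  simp only [fun a => h.constrainedInf_cost_eq_zero_of_lt a (hu.1.1 a) (hlt a),
    Finset.sum_const_zero] at hsum
  exact hκ.ne hsum

end IsConvexBudgetFamily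

lemma convexOn_sum_mul {S : Type*} [Fintype S] (z : S → ℝ) {K : Set (S → ℝ)} (hK : Convex ℝ K) :
    ConvexOn ℝ K (fun p => ∑ i, z i * p i) :=
  ⟨hK, fun x _ y _ s t _ _ _ => le_of_eq <| by
    simp only [Pi.add_apply, Pi.smul_apply, smul_eq_mul, Finset.mul_sum, ← Finset.sum_add_distrib]
    exact Finset.sum_congr rfl fun i _ => by ring⟩

lemma convexOn_sum_mul_abs_sub {S : Type*} [Fintype S] {w : S → ℝ} (hw : ∀ i, 0 ≤ w i)
    (c : S → ℝ) {K : Set (S → ℝ)} (hK : Convex ℝ K) :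
    ConvexOn ℝ K (fun p => ∑ i, w i * |p i - c i|) := by
  refine ⟨hK, fun x _ y _ s t hs ht hst => ?_⟩
  simp only [Pi.add_apply, Pi.smul_apply, smul_eq_mul, Finset.mul_sum, ← Finset.sum_add_distrib]
  refine Finset.sum_le_sum fun i _ => ?_
  have hsplit : s * x i + t * y i - c i = s * (x i - c i) + t * (y i - c i) := by
    linear_combination (c i) * hst
  calc w i * |s * x i + t * y i - c i|
      ≤ w i * (|s * (x i - c i)| + |t * (y i - c i)|) := by
        rw [hsplit]; exact mul_le_mul_of_nonneg_left (abs_add_le _ _) (hw i)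
    _ = s * (w i * |x i - c i|) + t * (w i * |y i - c i|) := by
        rw [abs_mul, abs_mul, abs_of_nonneg hs, abs_of_nonneg ht]; ring

lemma isConvexBudgetFamily_stdSimplex {S A : Type*} [Fintype S] (z pbar w : A → S → ℝ)
    (hpbar : ∀ a, pbar a ∈ stdSimplex ℝ S) (hw : ∀ a i, 0 ≤ w a i) :
    IsConvexBudgetFamily (stdSimplex ℝ S) (fun a p => ∑ i, z a i * p i)
      (fun a p => ∑ i, w a i * |p i - pbar a i|) where
  isCompact := isCompact_stdSimplex ℝ S
  continuous_value a := by fun_prop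
  continuous_cost a := by fun_prop
  convexOn_value a := convexOn_sum_mul (z a) (convex_stdSimplex ℝ S)
  convexOn_cost a := convexOn_sum_mul_abs_sub (hw a) (pbar a) (convex_stdSimplex ℝ S)
  cost_nonneg a p _ := Finset.sum_nonneg fun i _ => mul_nonneg (hw a i) (abs_nonneg _)
  exists_cost_nonpos a := ⟨pbar a, hpbar a, by simp⟩

theorem optimal_greedy_policy_recovery_general
    {S A : Type*} [Fintype S] [Fintype A] [Nonempty A] [DecidableEq A]
    (z : A → S → ℝ) (pbar : A → S → ℝ) (hpbar : ∀ a, pbar a ∈ stdSimplex ℝ S)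
    (w : A → S → ℝ) (hw : ∀ a i, 0 < w a i)
    (κ : ℝ) (hκ : 0 < κ)
    (q : A → ℝ → ℝ)
    (hq : ∀ (a : A) (ξ : ℝ), q a ξ =
      sInf ((fun p : S → ℝ => ∑ i, z a i * p i) ''
        {p | p ∈ stdSimplex ℝ S ∧ ∑ i, w a i * |p i - pbar a i| ≤ ξ}))
    (qinv : A → ℝ → ℝ)
    (hqinv : ∀ (a : A) (u : ℝ), qinv a u =
      sInf ((fun p : S → ℝ => ∑ i, w a i * |p i - pbar a i|) ''
        {p | p ∈ stdSimplex ℝ S ∧ ∑ i, z a i * p i ≤ u}))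
    (ustar : ℝ)
    (hustar : IsLeast {u : ℝ |
        (∀ a, ∃ p ∈ stdSimplex ℝ S, ∑ i, z a i * p i ≤ u) ∧
        ∑ a, qinv a u ≤ κ} ustar)
    (ξstar : A → ℝ) (hξstar : ∀ a, ξstar a = qinv a ustar)
    (C : Set A) (hC : C = {a : A | q a (ξstar a) = ustar})
    -- subdifferential of the convex function `q a` on `[0,∞)` at `ξ`
    (subdiff : A → ℝ → Set ℝ)
    (hsubdiff : ∀ (a : A) (ξ : ℝ), subdiff a ξ =
      {g : ℝ | ∀ η : ℝ, 0 ≤ η → q a ξ + g * (η - ξ) ≤ q a η})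
    (Ξ : Set (A → ℝ))
    (hΞ : Ξ = {ξ : A → ℝ | (∀ a, 0 ≤ ξ a) ∧ ∑ a, ξ a ≤ κ})
    (dstar : A → ℝ)
    (hdstar :
      -- case (i)
      (∃ abar ∈ C, 0 ∈ subdiff abar (ξstar abar) ∧
        dstar = fun a => if a = abar then (1 : ℝ) else 0) ∨
      -- case (ii)
      ((∀ a ∈ C, 0 ∉ subdiff a (ξstar a)) ∧
        ∃ f : A → ℝ, (∀ a ∈ C, f a ∈ subdiff a (ξstar a)) ∧
          dstar = fun a =>
            (if a ∈ C then -(1 / f a) else 0) /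
              (∑ a', if a' ∈ C then -(1 / f a') else 0))) :
    dstar ∈ stdSimplex ℝ A ∧
    -- d* is optimal in the max-min problem
    sInf ((fun ξ : A → ℝ => ∑ a, dstar a * q a (ξ a)) '' Ξ) = ustar ∧
    (∀ d ∈ stdSimplex ℝ A,
      sInf ((fun ξ : A → ℝ => ∑ a, d a * q a (ξ a)) '' Ξ) ≤ ustar) ∧
    -- (d*, ξ*) is a saddle point
    (∀ ξ ∈ Ξ, ∑ a, dstar a * q a (ξstar a) ≤ ∑ a, dstar a * q a (ξ a)) ∧
    (∑ a, dstar a * q a (ξstar a)) = ustar ∧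
    (∀ d ∈ stdSimplex ℝ A, ∑ a, d a * q a (ξstar a) ≤ ustar) := by
  have hF := isConvexBudgetFamily_stdSimplex z pbar w hpbar fun a i => (hw a i).le
  set K := stdSimplex ℝ S
  set V : A → (S → ℝ) → ℝ := fun a p => ∑ i, z a i * p i
  set N : A → (S → ℝ) → ℝ := fun a p => ∑ i, w a i * |p i - pbar a i|
  obtain rfl : q = fun a => constrainedInf K (V a) (N a) := funext₂ hq
  obtain rfl : qinv = fun a => constrainedInf K (N a) (V a) := funext₂ hqinv
  obtain rfl : ξstar = fun a => constrainedInf K (N a) (V a) ustar := funext hξstar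
  obtain rfl : subdiff = fun a ξ =>
      {g | HasSubgradientWithinAt (constrainedInf K (V a) (N a)) g (Ici 0) ξ} := funext₂ hsubdiff
  obtain rfl : Ξ = budgetAllocations A κ := hΞ
  subst hC
  have hu : IsLeast (admissibleLevels K V N κ) ustar := hustar
  have hqξ a := hF.constrainedInf_value_le a (hu.1.1 a)
  refine maxmin_saddle_of_isMinOn (q := fun a => constrainedInf K (V a) (N a))
    (ξs := fun a => constrainedInf K (N a) (V a) ustar) hF.exists_le_constrainedInf
    (hF.mem_budgetAllocations_of_isLeast hu) hqξ ?_
  rcases hdstar with ⟨abar, habar, h0, hd⟩ | ⟨h0, f, hf, hd⟩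
  · exact unit_weights_isMinOn habar h0 hd
  · have hstrict : ∀ a, ∃ p ∈ K, V a p < ustar := fun a =>
      (hF.exists_lt_or_isMinOn a (hu.1.1 a)).resolve_right fun hmin =>
        h0 a hmin.1 hmin.2.hasSubgradientWithinAt_zero
    have hf_neg : ∀ a ∈ _, f a < 0 := fun a ha =>
      ((hf a ha).nonpos (hF.constrainedInf_cost_nonneg a (hu.1.1 a))
        (hF.antitoneOn_constrainedInf a)).lt_of_ne fun hfa => h0 a ha (hfa ▸ hf a ha)
    exact inv_neg_weights_isMinOn (hF.exists_constrainedInf_eq_of_isLeast hκ hu) hf_neg hf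
      (fun a ha => hF.constrainedInf_cost_eq_zero_of_lt a (hu.1.1 a) ((hqξ a).lt_of_ne ha))
      (hF.sum_constrainedInf_eq_of_isLeast hu hstrict) hd

/-- Recovery of an optimal greedy policy. With `u*`, `ξ*` and
`C = {a : q_a(ξ*_a) = u*}` as in the bisection scheme, the vector `d*` constructed
from the subdifferentials of the `q_a` (case (i): a unit vector on some `ā ∈ C`
with `0 ∈ ∂q_ā(ξ*_ā)`; case (ii): `d*_a ∝ −1/f_a` on `C` with `f_a ∈ ∂q_a(ξ*_a)`)
lies in `Δ^A`, is optimal in the max-min problem, and `(d*, ξ*)` is a saddle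
point. -/
theorem optimal_greedy_policy_recovery
    {S A : Type*} [Fintype S] [Nonempty S] [Fintype A] [Nonempty A] [DecidableEq A]
    (z : A → S → ℝ) (pbar : A → S → ℝ) (hpbar : ∀ a, pbar a ∈ stdSimplex ℝ S)
    (w : A → S → ℝ) (hw : ∀ a i, 0 < w a i)
    (κ : ℝ) (hκ : 0 < κ)
    (q : A → ℝ → ℝ)
    (hq : ∀ (a : A) (ξ : ℝ), q a ξ =
      sInf ((fun p : S → ℝ => ∑ i, z a i * p i) ''
        {p | p ∈ stdSimplex ℝ S ∧ ∑ i, w a i * |p i - pbar a i| ≤ ξ}))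
    (qinv : A → ℝ → ℝ)
    (hqinv : ∀ (a : A) (u : ℝ), qinv a u =
      sInf ((fun p : S → ℝ => ∑ i, w a i * |p i - pbar a i|) ''
        {p | p ∈ stdSimplex ℝ S ∧ ∑ i, z a i * p i ≤ u}))
    (ustar : ℝ)
    (hustar : IsLeast {u : ℝ |
        (∀ a, ∃ p ∈ stdSimplex ℝ S, ∑ i, z a i * p i ≤ u) ∧
        ∑ a, qinv a u ≤ κ} ustar)
    (ξstar : A → ℝ) (hξstar : ∀ a, ξstar a = qinv a ustar)
    (C : Set A) (hC : C = {a : A | q a (ξstar a) = ustar})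
    -- subdifferential of the convex function `q a` on `[0,∞)` at `ξ`
    (subdiff : A → ℝ → Set ℝ)
    (hsubdiff : ∀ (a : A) (ξ : ℝ), subdiff a ξ =
      {g : ℝ | ∀ η : ℝ, 0 ≤ η → q a ξ + g * (η - ξ) ≤ q a η})
    (Ξ : Set (A → ℝ))
    (hΞ : Ξ = {ξ : A → ℝ | (∀ a, 0 ≤ ξ a) ∧ ∑ a, ξ a ≤ κ})
    (dstar : A → ℝ)
    (hdstar :
      -- case (i)
      (∃ abar ∈ C, 0 ∈ subdiff abar (ξstar abar) ∧
        dstar = fun a => if a = abar then (1 : ℝ) else 0) ∨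
      -- case (ii)
      ((∀ a ∈ C, 0 ∉ subdiff a (ξstar a)) ∧
        ∃ f : A → ℝ, (∀ a ∈ C, f a ∈ subdiff a (ξstar a)) ∧
          dstar = fun a =>
            (if a ∈ C then -(1 / f a) else 0) /
              (∑ a', if a' ∈ C then -(1 / f a') else 0))) :
    dstar ∈ stdSimplex ℝ A ∧
    -- d* is optimal in the max-min problem
    sInf ((fun ξ : A → ℝ => ∑ a, dstar a * q a (ξ a)) '' Ξ) = ustar ∧
    (∀ d ∈ stdSimplex ℝ A,
      sInf ((fun ξ : A → ℝ => ∑ a, d a * q a (ξ a)) '' Ξ) ≤ ustar) ∧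
    -- (d*, ξ*) is a saddle point
    (∀ ξ ∈ Ξ, ∑ a, dstar a * q a (ξstar a) ≤ ∑ a, dstar a * q a (ξ a)) ∧
    (∑ a, dstar a * q a (ξstar a)) = ustar ∧
    (∀ d ∈ stdSimplex ℝ A, ∑ a, d a * q a (ξstar a) ≤ ustar) :=
  optimal_greedy_policy_recovery_general z pbar hpbar w hw κ hκ q hq qinv hqinv ustar hustar ξstar
    hξstar C hC subdiff hsubdiff Ξ hΞ dstar hdstar
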